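/- arXiv:2012.07307 — 3 statements merged into one kernel-verified Lean document; each statement's English description precedes it below -/
import Mathlib

section
/- Suppose there exists an integer t₀ ≥ 1 with q_{t₀} = c and t₀ + s ≤ T. Then t₀ + s minimizes f_{(s,0)} over {s + 1, …, T}: for every integer t with s + 1 ≤ t ≤ T, f_{(s,0)}(t₀ + s) ≤ f_{(s,0)}(t). -/
/-!
Write `S u = ℙ(L > u) = exp (-θ u^β)`. Summation by parts turns the denominator of `q τ` into
`E τ = ∑_{u < τ} S u = 𝔼[min L τ]`, and its numerator is `N τ = (1 - S τ) g + S τ (h + m τ)`.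
Splitting the cost of a renewal at `s + τ` according to whether `L ≤ τ` gives
`f (s + τ) = (T - s) c + (N τ - c E τ) = (T - s) c + E τ (q τ - c)`, which is at least `(T - s) c`
because `c ≤ q τ`, with equality at `τ = t₀`.
-/

open MeasureTheory ProbabilityTheory Real
open Finset

theorem sum_Icc_sub_mul_add_mul_eq_sum_range (F : ℝ → ℝ) (n : ℕ) :
    ∑ k ∈ Icc 1 n, (F (k - 1) - F k) * k + F n * n = ∑ k ∈ range n, F k := by
  induction n with
  | zero => simp
  | succ n ih =>
    rw [sum_Icc_succ_top (by omega), sum_range_succ, ← ih]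
    push_cast
    rw [add_sub_cancel_right]
    ring

theorem cast_min_eq_sum_range_ite (n τ : ℕ) :
    ((min n τ : ℕ) : ℝ) = ∑ k ∈ range τ, if k < n then (1 : ℝ) else 0 := by
  rw [sum_boole, Nat.cast_inj, ← card_range (min n τ)]
  congr 1
  ext k
  simp [and_comm]

theorem iInf_succ_le_of_nonneg {q : ℕ → ℝ} (hq : ∀ n, 1 ≤ n → 0 ≤ q n) {n : ℕ} (hn : 1 ≤ n) :
    ⨅ t, q (t + 1) ≤ q n := by
  obtain ⟨k, rfl⟩ := Nat.exists_eq_add_of_le' hn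
  exact ciInf_le ⟨0, by rintro _ ⟨j, rfl⟩; exact hq _ (by omega)⟩ k

section SurvivalFunction

variable {Ω : Type*} [MeasurableSpace Ω] {μ : Measure Ω} [IsProbabilityMeasure μ]
  {L : Ω → ℕ}

theorem integral_min_eq_sum_measureReal_lt (hL : Measurable L) (τ : ℕ) :
    ∫ ω, ((min (L ω) τ : ℕ) : ℝ) ∂μ = ∑ k ∈ range τ, μ.real {ω | k < L ω} := by
  have hmeas : ∀ k : ℕ, MeasurableSet {ω | k < L ω} := fun k => hL measurableSet_Ioi
  have hmin : ∀ ω,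
      ((min (L ω) τ : ℕ) : ℝ) = ∑ k ∈ range τ, {ω | k < L ω}.indicator (fun _ => 1) ω := by
    intro ω
    rw [cast_min_eq_sum_range_ite]
    simp [Set.indicator_apply]
  simp_rw [hmin]
  rw [integral_finsetSum _ fun k _ => (integrable_const (1 : ℝ)).indicator (hmeas k)]
  refine sum_congr rfl fun k _ => ?_
  exact integral_indicator_one (hmeas k)

theorem integral_ite_le_affine (hL : Measurable L) (τ : ℕ) (a b c R : ℝ) :
    ∫ ω, (if L ω ≤ τ then a + (R - L ω) * c else b + (R - τ) * c) ∂μ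
      = R * c + ((1 - μ.real {ω | τ < L ω}) * a + μ.real {ω | τ < L ω} * b)
        - c * ∑ k ∈ range τ, μ.real {ω | k < L ω} := by
  have hmeas : MeasurableSet {ω | τ < L ω} := hL measurableSet_Ioi
  have hsplit : ∀ ω, (if L ω ≤ τ then a + (R - L ω) * c else b + (R - τ) * c)
      = (R * c + a) + {ω | τ < L ω}.indicator (fun _ => b - a) ω
        - c * ((min (L ω) τ : ℕ) : ℝ) := by
    intro ω
    by_cases h : L ω ≤ τ
    · rw [if_pos h, min_eq_left h,
        Set.indicator_of_notMem (show ω ∉ {ω | τ < L ω} from not_lt.mpr h)]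
      ring
    · rw [if_neg h, min_eq_right (not_le.mp h).le,
        Set.indicator_of_mem (show ω ∈ {ω | τ < L ω} from not_le.mp h)]
      ring
  have hmin : Integrable (fun ω => ((min (L ω) τ : ℕ) : ℝ)) μ :=
    (integrable_const (τ : ℝ)).mono' (by fun_prop) (.of_forall fun ω => by
      rw [Real.norm_eq_abs, abs_of_nonneg (by positivity)]
      exact_mod_cast min_le_right _ _)
  have hind : Integrable (fun ω => {ω | τ < L ω}.indicator (fun _ => b - a) ω) μ :=
    (integrable_const _).indicator hmeas
  simp_rw [hsplit]
  rw [integral_sub (by fun_prop) (by fun_prop), integral_add (by fun_prop) hind,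
    integral_const, integral_indicator_const _ hmeas, integral_const_mul,
    integral_min_eq_sum_measureReal_lt hL]
  simp
  ring

theorem integral_cost_of_renewal_at (hL : Measurable L) {s τ : ℕ} {g h m c T : ℝ}
    {Q : ℝ → ℝ} (hQ : ∀ u : ℝ, Q u = if u ≤ ((s + τ : ℕ) : ℝ) then g + (T - u) * c
      else h + (((s + τ : ℕ) : ℝ) - s) * m + (T - ((s + τ : ℕ) : ℝ)) * c) :
    ∫ ω, Q (s + L ω) ∂μ = (T - s) * c
      + ((1 - μ.real {ω | τ < L ω}) * g + μ.real {ω | τ < L ω} * (h + m * τ))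
      - c * ∑ k ∈ range τ, μ.real {ω | k < L ω} := by
  have hQL : ∀ ω, Q (s + L ω) = if L ω ≤ τ then g + ((T - s) - L ω) * c
      else (h + m * τ) + ((T - s) - τ) * c := fun ω => by
    rw [hQ]
    push_cast
    simp only [add_le_add_iff_left, Nat.cast_le]
    split_ifs <;> ring
  simp_rw [hQL]
  exact integral_ite_le_affine hL τ g (h + m * τ) c (T - s)

end SurvivalFunction

theorem age_zero_optimal_time_general
    {Ω : Type*} [MeasureSpace Ω] [IsProbabilityMeasure (ℙ : Measure Ω)]
    (θ β g h m : ℝ) (hg : 0 ≤ g) (hh : 0 ≤ h) (hm : 0 ≤ m)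
    (L : Ω → ℕ) (hmeasL : Measurable L)
    (hsurvL : ∀ u : ℕ, ℙ {ω | u < L ω} = ENNReal.ofReal (Real.exp (-θ * (u : ℝ) ^ β)))
    (q : ℕ → ℝ)
    (hq : ∀ t : ℕ, 1 ≤ t →
      q t = ((1 - Real.exp (-θ * (t : ℝ) ^ β)) * g
            + Real.exp (-θ * (t : ℝ) ^ β) * (h + m * t))
          / ((∑ k ∈ Finset.Icc 1 t,
              (Real.exp (-θ * ((k : ℝ) - 1) ^ β) - Real.exp (-θ * (k : ℝ) ^ β)) * (k : ℝ))
            + Real.exp (-θ * (t : ℝ) ^ β) * (t : ℝ)))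
    (c : ℝ) (hc : c = ⨅ t : ℕ, q (t + 1))
    (T s : ℕ)
    (Q : ℕ → ℝ → ℝ)
    (hQ : ∀ t : ℕ, s + 1 ≤ t → t ≤ T → ∀ u : ℝ,
      Q t u = if u ≤ (t : ℝ) then g + ((T : ℝ) - u) * c
              else h + ((t : ℝ) - (s : ℝ)) * m + ((T : ℝ) - (t : ℝ)) * c)
    (f : ℕ → ℝ)
    (hf : ∀ t : ℕ, f t = ∫ ω, Q t ((s : ℝ) + (L ω : ℝ)) ∂ℙ)
    (t₀ : ℕ) (ht₀ : 1 ≤ t₀) (hqt₀ : q t₀ = c) (ht₀T : t₀ + s ≤ T) :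
    ∀ t : ℕ, s + 1 ≤ t → t ≤ T → f (t₀ + s) ≤ f t := by
  set S : ℕ → ℝ := fun u => exp (-θ * (u : ℝ) ^ β)
  set N : ℕ → ℝ := fun n => (1 - S n) * g + S n * (h + m * n)
  set E : ℕ → ℝ := fun n => ∑ k ∈ range n, S k
  have hS : ∀ u, (ℙ : Measure Ω).real {ω | u < L ω} = S u := fun u => by
    rw [measureReal_def, hsurvL, ENNReal.toReal_ofReal (exp_pos _).le]
  have hE : ∀ n, 1 ≤ n → 0 < E n := fun n hn =>
    sum_pos (fun k _ => exp_pos _) (nonempty_range_iff.mpr (by omega))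
  have hqNE : ∀ n, 1 ≤ n → q n = N n / E n := fun n hn => by
    have hsum := sum_Icc_sub_mul_add_mul_eq_sum_range (fun x => exp (-θ * x ^ β)) n
    rw [hq n hn, hsum]
  have hq_nonneg : ∀ n, 1 ≤ n → 0 ≤ q n := fun n hn => by
    have hS_le : S n ≤ 1 := hS n ▸ measureReal_le_one
    rw [hqNE n hn]
    refine div_nonneg (add_nonneg (mul_nonneg (sub_nonneg.2 hS_le) hg) ?_) (hE n hn).le
    exact mul_nonneg (exp_pos _).le (by positivity)
  have hfτ : ∀ τ, 1 ≤ τ → s + τ ≤ T → f (s + τ) = (T - s) * c + (N τ - c * E τ) := by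
    intro τ hτ hτT
    rw [hf, integral_cost_of_renewal_at hmeasL (hQ _ (by omega) hτT)]
    simp only [hS, N, E]
    ring
  intro t hst htT
  obtain ⟨τ, rfl⟩ := Nat.exists_eq_add_of_le (by omega : s ≤ t)
  have hτ : c ≤ N τ / E τ := hqNE τ (by omega) ▸ hc ▸ iInf_succ_le_of_nonneg hq_nonneg (by omega)
  rw [le_div_iff₀ (hE τ (by omega))] at hτ
  rw [hqNE t₀ ht₀, div_eq_iff (hE t₀ ht₀).ne'] at hqt₀
  rw [add_comm t₀, hfτ t₀ ht₀ (by omega), hfτ τ (by omega) htT]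
  linarith

/-- If some integer `t₀ ≥ 1` satisfies `q_{t₀} = c` and `t₀ + s ≤ T`, then
`t₀ + s` minimizes `f_{(s,0)}` over `{s + 1, …, T}`. -/
theorem age_zero_optimal_time
    {Ω : Type*} [MeasureSpace Ω] [IsProbabilityMeasure (ℙ : Measure Ω)]
    (θ β g h m : ℝ) (hθ : 0 < θ) (hβ : 1 < β) (hg : 0 ≤ g) (hh : 0 ≤ h) (hm : 0 ≤ m)
    (L : Ω → ℕ) (hmeasL : Measurable L) (hposL : ∀ ω, 1 ≤ L ω)
    (hsurvL : ∀ u : ℕ, ℙ {ω | u < L ω} = ENNReal.ofReal (Real.exp (-θ * (u : ℝ) ^ β)))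
    (q : ℕ → ℝ)
    (hq : ∀ t : ℕ, 1 ≤ t →
      q t = ((1 - Real.exp (-θ * (t : ℝ) ^ β)) * g
            + Real.exp (-θ * (t : ℝ) ^ β) * (h + m * t))
          / ((∑ k ∈ Finset.Icc 1 t,
              (Real.exp (-θ * ((k : ℝ) - 1) ^ β) - Real.exp (-θ * (k : ℝ) ^ β)) * (k : ℝ))
            + Real.exp (-θ * (t : ℝ) ^ β) * (t : ℝ)))
    (c : ℝ) (hc : c = ⨅ t : ℕ, q (t + 1))
    (T s : ℕ) (hT : 1 ≤ T) (hsT : s < T)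
    (Q : ℕ → ℝ → ℝ)
    (hQ : ∀ t : ℕ, s + 1 ≤ t → t ≤ T → ∀ u : ℝ,
      Q t u = if u ≤ (t : ℝ) then g + ((T : ℝ) - u) * c
              else h + ((t : ℝ) - (s : ℝ)) * m + ((T : ℝ) - (t : ℝ)) * c)
    (f : ℕ → ℝ)
    (hf : ∀ t : ℕ, f t = ∫ ω, Q t ((s : ℝ) + (L ω : ℝ)) ∂ℙ)
    (t₀ : ℕ) (ht₀ : 1 ≤ t₀) (hqt₀ : q t₀ = c) (ht₀T : t₀ + s ≤ T) :
    ∀ t : ℕ, s + 1 ≤ t → t ≤ T → f (t₀ + s) ≤ f t :=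
  age_zero_optimal_time_general θ β g h m hg hh hm L hmeasL hsurvL q hq c hc T s Q hQ f hf t₀ ht₀
    hqt₀ ht₀T
end

section
/- (Proposition 3, first part.) Let a ≥ 0 be an integer. Suppose f_{(0,a)} attains its minimum over {1, …, T} at some point τ_a ≤ T − s and f_{(0,0)} attains its minimum over {1, …, T} at some point τ₀ ≤ T − s. Then the virtual replacement cost satisfies b_{(s,a)} = b_a, where b_{(s,a)} = f*_{(s,a)} − f*_{(s,0)}, b_a = b_{(0,a)} = f*_{(0,a)} − f*_{(0,0)}, and f*_{(s',a')} = min over t ∈ {s' + 1, …, T} of f_{(s',a')}(t). -/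
open MeasureTheory ProbabilityTheory Real Finset

/-!
Starting the planning horizon `s` periods later only shifts time: the expected cost of replacing
at `t + s` from `(s, a)` is the expected cost of replacing at `t` from `(0, a)`, minus `s c` for
the `s` fewer periods charged at rate `c` after the replacement. Since both minimisers lie in the
shifted window, each optimum drops by the same `s c`, which cancels in `b_{(s,a)}`.
-/

lemma integrable_comp_of_forall_ge_eq {Ω E : Type*} [MeasurableSpace Ω] [NormedAddCommGroup E]
    {μ : Measure Ω} [IsFiniteMeasure μ] {X : Ω → ℕ} (hX : Measurable X) {φ : ℕ → E} {N : ℕ}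
    (hφ : ∀ n, N ≤ n → φ n = φ N) : Integrable (fun ω => φ (X ω)) μ := by
  refine .of_bound (StronglyMeasurable.of_discrete.comp_measurable hX).aestronglyMeasurable
    (∑ k ∈ range (N + 1), ‖φ k‖) (.of_forall fun ω => ?_)
  have hclamp : φ (X ω) = φ (min (X ω) N) := by
    rcases le_total N (X ω) with hN | hN
    · rw [min_eq_right hN, hφ _ hN]
    · rw [min_eq_left hN]
  rw [hclamp]
  exact single_le_sum (f := fun k => ‖φ k‖) (fun _ _ => norm_nonneg _)
    (mem_range.2 (Nat.lt_succ_of_le (min_le_right _ _)))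

lemma Finset.inf'_eq_of_isMinOn {ι α : Type*} [LinearOrder α] {s : Finset ι} (hs : s.Nonempty)
    {f : ι → α} {i : ι} (hi : i ∈ s) (hmin : IsMinOn f s i) : s.inf' hs f = f i :=
  le_antisymm (inf'_le f hi) (le_inf' hs f hmin)

lemma inf'_Icc_add_eq_of_isMinOn {α : Type*} [AddCommGroup α] [LinearOrder α]
    [IsOrderedAddMonoid α] {F G : ℕ → α} {k : α} {s T τ : ℕ}
    (hne : (Icc (s + 1) T).Nonempty) (hne0 : (Icc 1 T).Nonempty)
    (hshift : ∀ t, 1 ≤ t → t + s ≤ T → F (t + s) = G t - k)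
    (hτ : 1 ≤ τ) (hτs : τ + s ≤ T) (hmin : IsMinOn G (Icc 1 T) τ) :
    (Icc (s + 1) T).inf' hne F = (Icc 1 T).inf' hne0 G - k := by
  have hminF : IsMinOn F (Icc (s + 1) T) (τ + s) := by
    intro t ht
    obtain ⟨hst, htT⟩ := mem_Icc.1 ht
    obtain ⟨u, rfl⟩ : ∃ u, t = u + s := ⟨t - s, by omega⟩
    rw [Set.mem_ofPred_eq, hshift τ hτ hτs, hshift u (by omega) htT]
    exact sub_le_sub_right (hmin (mem_Icc.2 ⟨by omega, by omega⟩)) k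
  rw [Finset.inf'_eq_of_isMinOn hne0 (mem_Icc.2 ⟨hτ, by omega⟩) hmin,
    Finset.inf'_eq_of_isMinOn hne (mem_Icc.2 ⟨by omega, hτs⟩) hminF, hshift τ hτ hτs]

/-- `Q_{(s,a)}(t, s + u)`, where `u` is the residual life `L_a`. -/
noncomputable def replacementCost (g h m c : ℝ) (T s a t u : ℕ) : ℝ :=
  if (s : ℝ) + (u : ℝ) ≤ (t : ℝ) then g + ((T : ℝ) - ((s : ℝ) + (u : ℝ))) * c
  else h + ((t : ℝ) - (s : ℝ) + (a : ℝ)) * m + ((T : ℝ) - (t : ℝ)) * c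

section replacementCost

variable {g h m c : ℝ} {T s a t : ℕ}

lemma replacementCost_add_right (u : ℕ) :
    replacementCost g h m c T s a (t + s) u = replacementCost g h m c T 0 a t u - s * c := by
  have hcond : (s : ℝ) + u ≤ ((t + s : ℕ) : ℝ) ↔ ((0 : ℕ) : ℝ) + u ≤ t := by
    push_cast
    constructor <;> intro <;> linarith
  unfold replacementCost
  rw [if_congr hcond rfl rfl]
  split_ifs <;> push_cast <;> ring

lemma replacementCost_of_lt {u : ℕ} (hu : t < s + u) :
    replacementCost g h m c T s a t u
      = h + ((t : ℝ) - (s : ℝ) + (a : ℝ)) * m + ((T : ℝ) - (t : ℝ)) * c := by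
  have : ¬ (s : ℝ) + (u : ℝ) ≤ (t : ℝ) := by exact_mod_cast hu.not_ge
  simp only [replacementCost, if_neg this]

lemma integrable_replacementCost {Ω : Type*} [MeasurableSpace Ω] {μ : Measure Ω}
    [IsFiniteMeasure μ] {X : Ω → ℕ} (hX : Measurable X) :
    Integrable (fun ω => replacementCost g h m c T s a t (X ω)) μ :=
  integrable_comp_of_forall_ge_eq hX (N := t + 1) fun n hn => by
    rw [replacementCost_of_lt (by omega), replacementCost_of_lt (by omega)]

lemma integral_replacementCost_add_right {Ω : Type*} [MeasurableSpace Ω] {μ : Measure Ω}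
    [IsProbabilityMeasure μ] {X : Ω → ℕ} (hX : Measurable X) :
    ∫ ω, replacementCost g h m c T s a (t + s) (X ω) ∂μ
      = ∫ ω, replacementCost g h m c T 0 a t (X ω) ∂μ - s * c := by
  simp only [replacementCost_add_right]
  rw [integral_sub (integrable_replacementCost hX) (integrable_const _),
    integral_const, probReal_univ, one_smul]

end replacementCost

theorem virtual_replacement_cost_time_invariant_general
    {Ω : Type*} [MeasureSpace Ω] [IsProbabilityMeasure (ℙ : Measure Ω)]
    (g h m : ℝ)
    (c : ℝ)
    (T s : ℕ) (hsT : s < T)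
    (a : ℕ)
    -- the family of residual life lengths, one for each age
    (La : ℕ → Ω → ℕ) (hmeasLa : ∀ a', Measurable (La a'))
    -- the objective functions f_{(s',a')}
    (f : ℕ → ℕ → ℕ → ℝ)
    (hf : ∀ s' : ℕ, s' < T → ∀ a' : ℕ, ∀ t : ℕ, s' + 1 ≤ t → t ≤ T →
      f s' a' t = ∫ ω, (if (s' : ℝ) + (La a' ω : ℝ) ≤ (t : ℝ) then
                  g + ((T : ℝ) - ((s' : ℝ) + (La a' ω : ℝ))) * c
                else h + ((t : ℝ) - (s' : ℝ) + (a' : ℝ)) * m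
                      + ((T : ℝ) - (t : ℝ)) * c) ∂ℙ)
    -- f_{(0,a)} attains its minimum at τa ≤ T − s
    (τa : ℕ) (hτa1 : 1 ≤ τa)
    (hτamin : ∀ t : ℕ, 1 ≤ t → t ≤ T → f 0 a τa ≤ f 0 a t)
    (hτa3 : τa + s ≤ T)
    -- f_{(0,0)} attains its minimum at τ₀ ≤ T − s
    (τ₀ : ℕ) (hτ₀1 : 1 ≤ τ₀)
    (hτ₀min : ∀ t : ℕ, 1 ≤ t → t ≤ T → f 0 0 τ₀ ≤ f 0 0 t)
    (hτ₀3 : τ₀ + s ≤ T)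
    (hne : (Finset.Icc (s + 1) T).Nonempty) (hne0 : (Finset.Icc 1 T).Nonempty) :
    (Finset.Icc (s + 1) T).inf' hne (f s a) - (Finset.Icc (s + 1) T).inf' hne (f s 0)
      = (Finset.Icc 1 T).inf' hne0 (f 0 a) - (Finset.Icc 1 T).inf' hne0 (f 0 0) := by
  have hshift (a' t : ℕ) (ht : 1 ≤ t) (hts : t + s ≤ T) :
      f s a' (t + s) = f 0 a' t - s * c := by
    rw [hf s hsT a' (t + s) (by omega) hts, hf 0 (by omega) a' t (by omega) (by omega)]
    exact integral_replacementCost_add_right (hmeasLa a')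
  rw [inf'_Icc_add_eq_of_isMinOn hne hne0 (hshift a) hτa1 hτa3
      fun t ht => hτamin t (mem_Icc.1 ht).1 (mem_Icc.1 ht).2,
    inf'_Icc_add_eq_of_isMinOn hne hne0 (hshift 0) hτ₀1 hτ₀3
      fun t ht => hτ₀min t (mem_Icc.1 ht).1 (mem_Icc.1 ht).2]
  ring

/-- Proposition 3, first part: If `f_{(0,a)}` attains its minimum over
`{1, …, T}` at some `τ_a ≤ T − s` and `f_{(0,0)}` attains its minimum over `{1, …, T}` at
some `τ₀ ≤ T − s`, then the virtual replacement cost satisfies `b_{(s,a)} = b_a`, i.e.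
`f*_{(s,a)} − f*_{(s,0)} = f*_{(0,a)} − f*_{(0,0)}`. -/
theorem virtual_replacement_cost_time_invariant
    {Ω : Type*} [MeasureSpace Ω] [IsProbabilityMeasure (ℙ : Measure Ω)]
    (θ β g h m : ℝ) (hθ : 0 < θ) (hβ : 1 < β) (hg : 0 ≤ g) (hh : 0 ≤ h) (hm : 0 ≤ m)
    (q : ℕ → ℝ)
    (hq : ∀ t : ℕ, 1 ≤ t →
      q t = ((1 - Real.exp (-θ * (t : ℝ) ^ β)) * g
            + Real.exp (-θ * (t : ℝ) ^ β) * (h + m * t))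
          / ((∑ k ∈ Finset.Icc 1 t,
              (Real.exp (-θ * ((k : ℝ) - 1) ^ β) - Real.exp (-θ * (k : ℝ) ^ β)) * (k : ℝ))
            + Real.exp (-θ * (t : ℝ) ^ β) * (t : ℝ)))
    (c : ℝ) (hc : c = ⨅ t : ℕ, q (t + 1))
    (T s : ℕ) (hT : 1 ≤ T) (hsT : s < T)
    (a : ℕ)
    -- the family of residual life lengths, one for each age
    (La : ℕ → Ω → ℕ) (hmeasLa : ∀ a', Measurable (La a')) (hposLa : ∀ a' ω, 1 ≤ La a' ω)
    (hsurvLa : ∀ a' : ℕ, ∀ u : ℕ, ℙ {ω | u < La a' ω}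
      = ENNReal.ofReal (Real.exp (θ * ((a' : ℝ) ^ β - ((a' : ℝ) + u) ^ β))))
    -- the objective functions f_{(s',a')}
    (f : ℕ → ℕ → ℕ → ℝ)
    (hf : ∀ s' : ℕ, s' < T → ∀ a' : ℕ, ∀ t : ℕ, s' + 1 ≤ t → t ≤ T →
      f s' a' t = ∫ ω, (if (s' : ℝ) + (La a' ω : ℝ) ≤ (t : ℝ) then
                  g + ((T : ℝ) - ((s' : ℝ) + (La a' ω : ℝ))) * c
                else h + ((t : ℝ) - (s' : ℝ) + (a' : ℝ)) * m
                      + ((T : ℝ) - (t : ℝ)) * c) ∂ℙ)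
    -- f_{(0,a)} attains its minimum at τa ≤ T − s
    (τa : ℕ) (hτa1 : 1 ≤ τa) (hτa2 : τa ≤ T)
    (hτamin : ∀ t : ℕ, 1 ≤ t → t ≤ T → f 0 a τa ≤ f 0 a t)
    (hτa3 : τa + s ≤ T)
    -- f_{(0,0)} attains its minimum at τ₀ ≤ T − s
    (τ₀ : ℕ) (hτ₀1 : 1 ≤ τ₀) (hτ₀2 : τ₀ ≤ T)
    (hτ₀min : ∀ t : ℕ, 1 ≤ t → t ≤ T → f 0 0 τ₀ ≤ f 0 0 t)
    (hτ₀3 : τ₀ + s ≤ T)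
    (hne : (Finset.Icc (s + 1) T).Nonempty) (hne0 : (Finset.Icc 1 T).Nonempty) :
    (Finset.Icc (s + 1) T).inf' hne (f s a) - (Finset.Icc (s + 1) T).inf' hne (f s 0)
      = (Finset.Icc 1 T).inf' hne0 (f 0 a) - (Finset.Icc 1 T).inf' hne0 (f 0 0) :=
  virtual_replacement_cost_time_invariant_general g h m c T s hsT a La hmeasLa f hf τa hτa1 hτamin
    hτa3 τ₀ hτ₀1 hτ₀min hτ₀3 hne hne0
end

section
/- (Proposition 3, second part.) Suppose there exists an integer t₀ ≥ 1 with q_{t₀} = c. Let a be an integer with 0 ≤ a ≤ s and a < t₀, and suppose t₀ + s − a ≤ T. Then t₀ + s − a minimizes f_{(s,a)} over {s + 1, …, T}: for every integer t with s + 1 ≤ t ≤ T, f_{(s,a)}(t₀ + s − a) ≤ f_{(s,a)}(t). In particular the optimal next preventive maintenance time satisfies t_{(s,a)} = t_{(0,0)} + s − a. -/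
/-!
Write `D k = ∑_{j<k} P(L > j) = E[min(L, k)]` and `N k` for the numerator of `q_k`. Summation
by parts gives `q_k = N k / D k`, so `c ≤ q_k` says `N k - c D k ≥ 0`, with equality at `t₀`.
Since `P(L_a > j) = e^{θ a^β} P(L > a + j)`, the expected cost of scheduling the next maintenance
at `s + n` is `K + e^{θ a^β} (N (a + n) - c D (a + n))` with `K` independent of `n`, which is
minimal for `a + n = t₀`.
-/

open MeasureTheory ProbabilityTheory Real

lemma sum_Icc_sub_mul_add_eq_sum_range (F : ℝ → ℝ) (t : ℕ) :
    ∑ k ∈ Finset.Icc 1 t, (F ((k : ℝ) - 1) - F k) * k + F t * t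
      = ∑ j ∈ Finset.range t, F j := by
  induction t with
  | zero => simp
  | succ t ih =>
    rw [Finset.sum_Icc_succ_top (by omega), Finset.sum_range_succ, ← ih]
    push_cast
    ring_nf

noncomputable def weibullTail (θ β : ℝ) (k : ℕ) : ℝ := exp (-θ * (k : ℝ) ^ β)

-- `weibullMeanMin` and `weibullCycleCost` are the `D` and `N` above.
noncomputable def weibullMeanMin (θ β : ℝ) (k : ℕ) : ℝ :=
  ∑ j ∈ Finset.range k, weibullTail θ β j

noncomputable def weibullCycleCost (θ β g h m : ℝ) (k : ℕ) : ℝ :=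
  (1 - weibullTail θ β k) * g + weibullTail θ β k * (h + m * k)

section Weibull

variable {θ β g h m : ℝ}

lemma weibullTail_le_one (hθ : 0 ≤ θ) (k : ℕ) : weibullTail θ β k ≤ 1 :=
  exp_le_one_iff.mpr (by have := rpow_nonneg (Nat.cast_nonneg k) β; nlinarith)

lemma weibullMeanMin_pos {k : ℕ} (hk : k ≠ 0) : 0 < weibullMeanMin θ β k :=
  Finset.sum_pos (fun _ _ => exp_pos _) (Finset.nonempty_range_iff.mpr hk)

lemma weibullMeanMin_add (a n : ℕ) :
    weibullMeanMin θ β (a + n)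
      = weibullMeanMin θ β a + ∑ j ∈ Finset.range n, weibullTail θ β (a + j) :=
  Finset.sum_range_add _ a n

lemma sum_Icc_weibull_add_eq_weibullMeanMin (θ β : ℝ) (t : ℕ) :
    ∑ k ∈ Finset.Icc 1 t,
        (exp (-θ * ((k : ℝ) - 1) ^ β) - exp (-θ * (k : ℝ) ^ β)) * (k : ℝ)
      + exp (-θ * (t : ℝ) ^ β) * (t : ℝ) = weibullMeanMin θ β t :=
  sum_Icc_sub_mul_add_eq_sum_range (fun x => exp (-θ * x ^ β)) t

lemma weibullCycleCost_nonneg (hθ : 0 ≤ θ) (hg : 0 ≤ g) (hh : 0 ≤ h) (hm : 0 ≤ m)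
    (k : ℕ) :
    0 ≤ weibullCycleCost θ β g h m k :=
  add_nonneg (mul_nonneg (sub_nonneg.mpr (weibullTail_le_one hθ k)) hg)
    (mul_nonneg (exp_pos _).le (by positivity))

lemma iInf_mul_weibullMeanMin_le (hθ : 0 ≤ θ) (hg : 0 ≤ g) (hh : 0 ≤ h) (hm : 0 ≤ m)
    {q : ℕ → ℝ}
    (hq : ∀ t, 1 ≤ t → q t = weibullCycleCost θ β g h m t / weibullMeanMin θ β t)
    {k : ℕ} (hk : 1 ≤ k) :
    (⨅ t : ℕ, q (t + 1)) * weibullMeanMin θ β k ≤ weibullCycleCost θ β g h m k := by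
  have hbdd : BddBelow (Set.range fun t : ℕ => q (t + 1)) := by
    refine ⟨0, Set.forall_mem_range.mpr fun t => ?_⟩
    rw [hq (t + 1) t.succ_pos]
    exact div_nonneg (weibullCycleCost_nonneg hθ hg hh hm _) (weibullMeanMin_pos t.succ_ne_zero).le
  rw [← le_div_iff₀ (weibullMeanMin_pos (by omega)), ← hq k hk]
  simpa [Nat.sub_add_cancel hk] using ciInf_le hbdd (k - 1)

end Weibull

lemma natCast_min_eq_sum_indicator {Ω : Type*} (X : Ω → ℕ) (n : ℕ) (ω : Ω) :
    ((min (X ω) n : ℕ) : ℝ) = ∑ j ∈ Finset.range n, {ω | j < X ω}.indicator 1 ω := by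
  simp only [Set.indicator_apply, Set.mem_ofPred_eq, Pi.one_apply]
  rw [Finset.sum_boole, show (Finset.range n).filter (· < X ω) = Finset.range (min (X ω) n) by
    ext; simp; omega, Finset.card_range]

section TruncatedExpectation

variable {Ω : Type*} [MeasurableSpace Ω] {μ : Measure Ω} {X : Ω → ℕ}

lemma integrable_natCast_min [IsFiniteMeasure μ] (hX : Measurable X) (n : ℕ) :
    Integrable (fun ω => ((min (X ω) n : ℕ) : ℝ)) μ := by
  simp_rw [natCast_min_eq_sum_indicator]
  exact integrable_finsetSum _ fun j _ => (integrable_const 1).indicator (hX measurableSet_Ioi)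

lemma integral_natCast_min [IsFiniteMeasure μ] (hX : Measurable X) (n : ℕ) :
    ∫ ω, ((min (X ω) n : ℕ) : ℝ) ∂μ
      = ∑ j ∈ Finset.range n, μ.real {ω | j < X ω} := by
  simp_rw [natCast_min_eq_sum_indicator]
  rw [integral_finsetSum _ fun j _ => (integrable_const 1).indicator (hX measurableSet_Ioi)]
  exact Finset.sum_congr rfl fun j _ => integral_indicator_one (hX measurableSet_Ioi)

lemma integral_ite_natCast_le [IsProbabilityMeasure μ] (hX : Measurable X) (n : ℕ)
    (A B C : ℝ) :
    ∫ ω, (if (X ω : ℝ) ≤ n then A - C * X ω else B - C * n) ∂μ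
      = A - C * ∑ j ∈ Finset.range n, μ.real {ω | j < X ω}
        + (B - A) * μ.real {ω | n < X ω} := by
  have hmeas : MeasurableSet {ω | n < X ω} := hX measurableSet_Ioi
  have hmin := (integrable_natCast_min (μ := μ) hX n).const_mul C
  have hpt (ω : Ω) : (if (X ω : ℝ) ≤ n then A - C * X ω else B - C * n)
      = A - C * ((min (X ω) n : ℕ) : ℝ) + {ω | n < X ω}.indicator (fun _ => B - A) ω := by
    by_cases hle : X ω ≤ n
    · simp [hle, Set.indicator_of_notMem, not_lt.mpr hle]
    · simp [hle, Set.indicator_of_mem, not_le.mp hle, min_eq_right (not_le.mp hle).le]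
  simp_rw [hpt]
  rw [integral_add ((integrable_const A).sub' hmin) ((integrable_const _).indicator hmeas),
    integral_sub (integrable_const A) hmin, integral_const_mul, integral_natCast_min hX,
    integral_indicator_const _ hmeas]
  simp [mul_comm]

end TruncatedExpectation

-- The paper's `Q_{(s,a)}(t, u)`.
noncomputable def maintenanceCost (g h m c : ℝ) (T s a t : ℕ) (u : ℝ) : ℝ :=
  if u ≤ t then g + ((T : ℝ) - u) * c else h + ((t : ℝ) - s + a) * m + ((T : ℝ) - t) * c

lemma maintenanceCost_add_add (g h m c : ℝ) (T s a n ℓ : ℕ) :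
    maintenanceCost g h m c T s a (s + n) ((s : ℝ) + ℓ)
      = if (ℓ : ℝ) ≤ n then (g + (T - s) * c) - c * ℓ
        else (h + (n + a) * m + (T - s) * c) - c * n := by
  unfold maintenanceCost
  push_cast
  simp only [add_le_add_iff_left]
  split_ifs <;> ring

lemma integral_maintenanceCost_eq {Ω : Type*} [MeasureSpace Ω]
    [IsProbabilityMeasure (ℙ : Measure Ω)] {θ β g h m c : ℝ} {T s a : ℕ} {La : Ω → ℕ}
    (hmeasLa : Measurable La)
    (hsurvLa : ∀ u : ℕ, ℙ {ω | u < La ω}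
      = ENNReal.ofReal (exp (θ * ((a : ℝ) ^ β - ((a : ℝ) + u) ^ β))))
    (n : ℕ) :
    ∫ ω, maintenanceCost g h m c T s a (s + n) (s + La ω) ∂ℙ
      = g + (T - s) * c + exp (θ * a ^ β) * (c * weibullMeanMin θ β a - g)
        + exp (θ * a ^ β)
          * (weibullCycleCost θ β g h m (a + n) - c * weibullMeanMin θ β (a + n)) := by
  have hsurv (j : ℕ) :
      (ℙ : Measure Ω).real {ω | j < La ω} = exp (θ * a ^ β) * weibullTail θ β (a + j) := by
    rw [measureReal_def, hsurvLa, ENNReal.toReal_ofReal (exp_pos _).le, weibullTail, ← exp_add]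
    push_cast
    ring_nf
  simp_rw [maintenanceCost_add_add]
  rw [integral_ite_natCast_le hmeasLa]
  simp only [hsurv, ← Finset.mul_sum]
  rw [weibullMeanMin_add]
  unfold weibullCycleCost
  push_cast
  ring

theorem optimal_time_shift_by_age_general
    {Ω : Type*} [MeasureSpace Ω] [IsProbabilityMeasure (ℙ : Measure Ω)]
    (θ β g h m : ℝ) (hθ : 0 < θ) (hg : 0 ≤ g) (hh : 0 ≤ h) (hm : 0 ≤ m)
    (q : ℕ → ℝ)
    (hq : ∀ t : ℕ, 1 ≤ t →
      q t = ((1 - Real.exp (-θ * (t : ℝ) ^ β)) * g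
            + Real.exp (-θ * (t : ℝ) ^ β) * (h + m * t))
          / ((∑ k ∈ Finset.Icc 1 t,
              (Real.exp (-θ * ((k : ℝ) - 1) ^ β) - Real.exp (-θ * (k : ℝ) ^ β)) * (k : ℝ))
            + Real.exp (-θ * (t : ℝ) ^ β) * (t : ℝ)))
    (c : ℝ) (hc : c = ⨅ t : ℕ, q (t + 1))
    (T s : ℕ)
    (a : ℕ)
    (La : Ω → ℕ) (hmeasLa : Measurable La)
    (hsurvLa : ∀ u : ℕ, ℙ {ω | u < La ω}
      = ENNReal.ofReal (Real.exp (θ * ((a : ℝ) ^ β - ((a : ℝ) + u) ^ β))))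
    (Q : ℕ → ℝ → ℝ)
    (hQ : ∀ t : ℕ, s + 1 ≤ t → t ≤ T → ∀ u : ℝ,
      Q t u = if u ≤ (t : ℝ) then g + ((T : ℝ) - u) * c
              else h + ((t : ℝ) - (s : ℝ) + (a : ℝ)) * m + ((T : ℝ) - (t : ℝ)) * c)
    (f : ℕ → ℝ)
    (hf : ∀ t : ℕ, f t = ∫ ω, Q t ((s : ℝ) + (La ω : ℝ)) ∂ℙ)
    (t₀ : ℕ) (hqt₀ : q t₀ = c)
    (hat₀ : a < t₀) (ht₀T : t₀ + s - a ≤ T) :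
    ∀ t : ℕ, s + 1 ≤ t → t ≤ T → f (t₀ + s - a) ≤ f t := by
  have hq' (t : ℕ) (ht : 1 ≤ t) :
      q t = weibullCycleCost θ β g h m t / weibullMeanMin θ β t := by
    rw [hq t ht, sum_Icc_weibull_add_eq_weibullMeanMin]
    rfl
  have hf_eq (n : ℕ) (hn : 1 ≤ n) (hnT : s + n ≤ T) :
      f (s + n) = g + (T - s) * c + exp (θ * a ^ β) * (c * weibullMeanMin θ β a - g)
        + exp (θ * a ^ β)
          * (weibullCycleCost θ β g h m (a + n) - c * weibullMeanMin θ β (a + n)) := by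
    rw [hf, ← integral_maintenanceCost_eq hmeasLa hsurvLa n]
    exact integral_congr_ae (.of_forall fun ω => hQ _ (by omega) hnT _)
  have hexcess_t₀ : weibullCycleCost θ β g h m t₀ - c * weibullMeanMin θ β t₀ = 0 := by
    rw [← hqt₀, hq' t₀ (by omega), div_mul_cancel₀ _ (weibullMeanMin_pos (by omega)).ne',
      sub_self]
  intro t hst htT
  obtain ⟨n, rfl⟩ : ∃ n, t = s + n := ⟨t - s, by omega⟩
  have hexcess_nonneg : c * weibullMeanMin θ β (a + n) ≤ weibullCycleCost θ β g h m (a + n) :=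
    hc ▸ iInf_mul_weibullMeanMin_le hθ.le hg hh hm hq' (by omega)
  rw [show t₀ + s - a = s + (t₀ - a) by omega, hf_eq _ (by omega) (by omega),
    hf_eq n (by omega) htT, Nat.add_sub_cancel' hat₀.le, hexcess_t₀, mul_zero, add_zero,
    le_add_iff_nonneg_right]
  exact mul_nonneg (exp_pos _).le (sub_nonneg.mpr hexcess_nonneg)

/-- Proposition 3, second part: Suppose `q_{t₀} = c` for some integer
`t₀ ≥ 1`. If `0 ≤ a ≤ s`, `a < t₀` and `t₀ + s − a ≤ T`, then `t₀ + s − a` minimizes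
`f_{(s,a)}` over `{s + 1, …, T}`; in particular `t_{(s,a)} = t_{(0,0)} + s − a`. -/
theorem optimal_time_shift_by_age
    {Ω : Type*} [MeasureSpace Ω] [IsProbabilityMeasure (ℙ : Measure Ω)]
    (θ β g h m : ℝ) (hθ : 0 < θ) (hβ : 1 < β) (hg : 0 ≤ g) (hh : 0 ≤ h) (hm : 0 ≤ m)
    (L : Ω → ℕ) (hmeasL : Measurable L) (hposL : ∀ ω, 1 ≤ L ω)
    (hsurvL : ∀ u : ℕ, ℙ {ω | u < L ω} = ENNReal.ofReal (Real.exp (-θ * (u : ℝ) ^ β)))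
    (q : ℕ → ℝ)
    (hq : ∀ t : ℕ, 1 ≤ t →
      q t = ((1 - Real.exp (-θ * (t : ℝ) ^ β)) * g
            + Real.exp (-θ * (t : ℝ) ^ β) * (h + m * t))
          / ((∑ k ∈ Finset.Icc 1 t,
              (Real.exp (-θ * ((k : ℝ) - 1) ^ β) - Real.exp (-θ * (k : ℝ) ^ β)) * (k : ℝ))
            + Real.exp (-θ * (t : ℝ) ^ β) * (t : ℝ)))
    (c : ℝ) (hc : c = ⨅ t : ℕ, q (t + 1))
    (T s : ℕ) (hT : 1 ≤ T) (hsT : s < T)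
    (a : ℕ)
    (La : Ω → ℕ) (hmeasLa : Measurable La) (hposLa : ∀ ω, 1 ≤ La ω)
    (hsurvLa : ∀ u : ℕ, ℙ {ω | u < La ω}
      = ENNReal.ofReal (Real.exp (θ * ((a : ℝ) ^ β - ((a : ℝ) + u) ^ β))))
    (Q : ℕ → ℝ → ℝ)
    (hQ : ∀ t : ℕ, s + 1 ≤ t → t ≤ T → ∀ u : ℝ,
      Q t u = if u ≤ (t : ℝ) then g + ((T : ℝ) - u) * c
              else h + ((t : ℝ) - (s : ℝ) + (a : ℝ)) * m + ((T : ℝ) - (t : ℝ)) * c)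
    (f : ℕ → ℝ)
    (hf : ∀ t : ℕ, f t = ∫ ω, Q t ((s : ℝ) + (La ω : ℝ)) ∂ℙ)
    (t₀ : ℕ) (ht₀ : 1 ≤ t₀) (hqt₀ : q t₀ = c)
    (has : a ≤ s) (hat₀ : a < t₀) (ht₀T : t₀ + s - a ≤ T) :
    ∀ t : ℕ, s + 1 ≤ t → t ≤ T → f (t₀ + s - a) ≤ f t :=
  optimal_time_shift_by_age_general θ β g h m hθ hg hh hm q hq c hc T s a La hmeasLa hsurvLa Q hQ f
    hf t₀ hqt₀ hat₀ ht₀T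
end
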